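/- arXiv:1004.0479 — 8 statements merged into one kernel-verified Lean document; each statement's English description precedes it below -/
import Mathlib

section
/- Let μ_max be a nonnegative real number, and let Q, A, μ : ℕ → ℝ be sequences satisfying, for every t ∈ ℕ: Q(t+1) = Q(t) − μ(t) + A(t), 0 ≤ μ(t) ≤ μ_max, A(t) ≥ 0, and μ(t) = 0 whenever Q(t) < 2·μ_max. If Q(0) ≥ μ_max, then Q(t) ≥ μ_max for all t ∈ ℕ. -/
theorem le_sub_add_of_consumption_gated {c q m a : ℝ} (hm : m ≤ c) (ha : 0 ≤ a)
    (hstop : q < 2 * c → m = 0) (hq : c ≤ q) : c ≤ q - m + a := by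
  rcases lt_or_ge q (2 * c) with hlow | hhigh
  · rw [hstop hlow]
    linarith
  · linarith

theorem inventory_lower_bound_general
    (μmax : ℝ)
    (Q A μ : ℕ → ℝ)
    (hdyn : ∀ t, Q (t + 1) = Q t - μ t + A t)
    (hμ : ∀ t, 0 ≤ μ t ∧ μ t ≤ μmax)
    (hA : ∀ t, 0 ≤ A t)
    (hstop : ∀ t, Q t < 2 * μmax → μ t = 0)
    (h0 : Q 0 ≥ μmax) :
    ∀ t, Q t ≥ μmax := by
  intro t
  induction t with
  | zero => exact h0
  | succ n ih =>
    rw [hdyn n]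
    exact le_sub_add_of_consumption_gated (hμ n).2 (hA n) (hstop n) ih

/-- Inventory lower bound lemma (sample-path, single queue): if consumption is capped by
`μmax`, consumption is zero whenever the queue is below `2·μmax`, and purchases are
nonnegative, then the queue never falls below `μmax` if it starts at or above that level. -/
theorem inventory_lower_bound
    (μmax : ℝ) (hμmax : 0 ≤ μmax)
    (Q A μ : ℕ → ℝ)
    (hdyn : ∀ t, Q (t + 1) = Q t - μ t + A t)
    (hμ : ∀ t, 0 ≤ μ t ∧ μ t ≤ μmax)
    (hA : ∀ t, 0 ≤ A t)
    (hstop : ∀ t, Q t < 2 * μmax → μ t = 0)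
    (h0 : Q 0 ≥ μmax) :
    ∀ t, Q t ≥ μmax :=
  inventory_lower_bound_general μmax Q A μ hdyn hμ hA hstop h0
end

section
/- Let M be a finite nonempty index set and fix m ∈ M. Let V ≥ 0, α ∈ ℝ, P ∈ ℝ, P_max ∈ ℝ, F ≥ 0 and μ_max ≥ 0 be real numbers with P ≤ P_max. Let β : M → ℝ satisfy β(i) ≥ 0 for all i and β(m) > 0, and let Q, θ, A_max : M → ℝ satisfy Q(i) − θ(i) ≤ A_max(i) for all i ≠ m and Q(m) ≤ 2·μ_max. If θ(m) ≥ V·(P_max − α)/β(m) + (Σ_{i ≠ m} β(i)·A_max(i))/β(m) + 2·μ_max, then V·(P − α)·F + F·Σ_{i ∈ M} β(i)·(Q(i) − θ(i)) ≤ 0. -/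
/-! The threshold `θ m` is chosen so that `β m * θ m` absorbs the largest possible margin
`V * (Pmax - α)`, the contribution `β i * Amax i` of every other queue, and `β m * (2 * μmax)`
from queue `m` itself; hence the bracket multiplying `F ≥ 0` is nonpositive. -/

theorem Finset.sum_mul_le_add_sum_erase {ι R : Type*} [DecidableEq ι] [Semiring R]
    [PartialOrder R] [IsOrderedRing R] {s : Finset ι} {m : ι} (hm : m ∈ s) {w x a : ι → R}
    (hw : ∀ i ∈ s, 0 ≤ w i) (hxa : ∀ i ∈ s, i ≠ m → x i ≤ a i) :
    ∑ i ∈ s, w i * x i ≤ w m * x m + ∑ i ∈ s.erase m, w i * a i := by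
  rw [← Finset.add_sum_erase s _ hm]
  gcongr with i hi
  · exact hw i (Finset.mem_of_mem_erase hi)
  · exact hxa i (Finset.mem_of_mem_erase hi) (Finset.ne_of_mem_erase hi)

theorem pricing_objective_nonpos_general
    {M : Type*} [Fintype M] [DecidableEq M] (m : M)
    (V α P Pmax F μmax : ℝ)
    (hV : 0 ≤ V) (hF : 0 ≤ F) (hP : P ≤ Pmax)
    (β Q θ Amax : M → ℝ)
    (hβ : ∀ i, 0 ≤ β i) (hβm : 0 < β m)
    (hQA : ∀ i, i ≠ m → Q i - θ i ≤ Amax i)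
    (hQm : Q m ≤ 2 * μmax)
    (hθm : θ m ≥ V * (Pmax - α) / β m
      + (∑ i ∈ Finset.univ.erase m, β i * Amax i) / β m + 2 * μmax) :
    V * (P - α) * F + F * ∑ i, β i * (Q i - θ i) ≤ 0 := by
  set S := ∑ i ∈ Finset.univ.erase m, β i * Amax i
  have hθ : V * (Pmax - α) + S + β m * (2 * μmax) ≤ β m * θ m := by
    have := mul_le_mul_of_nonneg_left hθm hβm.le
    rwa [mul_add, mul_add, mul_div_cancel₀ _ hβm.ne', mul_div_cancel₀ _ hβm.ne'] at this
  have hsum : ∑ i, β i * (Q i - θ i) ≤ β m * (Q m - θ m) + S :=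
    Finset.sum_mul_le_add_sum_erase (Finset.mem_univ m) (fun i _ => hβ i) (fun i _ => hQA i)
  have hprice : V * (P - α) ≤ V * (Pmax - α) := by gcongr
  have hQ : β m * Q m ≤ β m * (2 * μmax) := by gcongr
  have hbracket : V * (P - α) + ∑ i, β i * (Q i - θ i) ≤ 0 := by linarith
  calc V * (P - α) * F + F * ∑ i, β i * (Q i - θ i)
      = F * (V * (P - α) + ∑ i, β i * (Q i - θ i)) := by ring
    _ ≤ 0 := mul_nonpos_of_nonneg_of_nonpos hF hbracket

/-- Key inequality in the proof of the inventory lower bound lemma for JPP: the pricing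
objective functional is nonpositive when queue `m` is below `2·μmax` and the threshold
`θ m` is chosen large enough. -/
theorem pricing_objective_nonpos
    {M : Type*} [Fintype M] [DecidableEq M] [Nonempty M] (m : M)
    (V α P Pmax F μmax : ℝ)
    (hV : 0 ≤ V) (hF : 0 ≤ F) (hμmax : 0 ≤ μmax) (hP : P ≤ Pmax)
    (β Q θ Amax : M → ℝ)
    (hβ : ∀ i, 0 ≤ β i) (hβm : 0 < β m)
    (hQA : ∀ i, i ≠ m → Q i - θ i ≤ Amax i)
    (hQm : Q m ≤ 2 * μmax)
    (hθm : θ m ≥ V * (Pmax - α) / β m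
      + (∑ i ∈ Finset.univ.erase m, β i * Amax i) / β m + 2 * μmax) :
    V * (P - α) * F + F * ∑ i, β i * (Q i - θ i) ≤ 0 :=
  pricing_objective_nonpos_general m V α P Pmax F μmax hV hF hP β Q θ Amax hβ hβm hQA hQm hθm
end

section
/- Let c ≥ 0 and θ be real numbers, let t₀ and T be natural numbers, and let Q, x : ℕ → ℝ be sequences with |Q(τ+1) − Q(τ)| ≤ c and |x(τ)| ≤ c for all τ ∈ ℕ. Then Σ_{τ=t₀}^{t₀+T−1} (Q(τ) − θ)·x(τ) ≤ (T·(T−1)/2)·c² + (Q(t₀) − θ)·Σ_{τ=t₀}^{t₀+T−1} x(τ). -/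
/-! Since the increments of `Q` are at most `c`, `|Q (t₀ + k) - Q t₀| ≤ k c`; freezing the weight
therefore costs at most `k c²` in slot `t₀ + k`, and `∑_{k < T} k = T (T - 1) / 2`. -/

open Finset

theorem dist_le_mul_of_dist_succ_le {α : Type*} [PseudoMetricSpace α] {f : ℕ → α} {c : ℝ}
    (hf : ∀ n, dist (f n) (f (n + 1)) ≤ c) (m k : ℕ) : dist (f m) (f (m + k)) ≤ k * c := by
  simpa using dist_le_Ico_sum_of_dist_le (Nat.le_add_right m k) fun {n} _ _ => hf n

theorem sum_range_natCast {K : Type*} [Field K] [CharZero K] (n : ℕ) :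
    ∑ k ∈ range n, (k : K) = n * (n - 1) / 2 := by
  induction n with
  | zero => simp
  | succ n ih =>
    rw [sum_range_succ, ih]
    push_cast
    ring

theorem sum_range_sub_mul_le {Q x : ℕ → ℝ} {c : ℝ} (hQ : ∀ n, |Q (n + 1) - Q n| ≤ c)
    (hx : ∀ n, |x n| ≤ c) (t₀ T : ℕ) :
    ∑ k ∈ range T, (Q (t₀ + k) - Q t₀) * x (t₀ + k) ≤ T * (T - 1) / 2 * c ^ 2 := by
  have hc : 0 ≤ c := (abs_nonneg _).trans (hx 0)
  have hdrift (k : ℕ) : |Q (t₀ + k) - Q t₀| ≤ k * c := by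
    rw [abs_sub_comm, ← Real.dist_eq]
    exact dist_le_mul_of_dist_succ_le (fun n => by rw [Real.dist_eq, abs_sub_comm]; exact hQ n) _ _
  calc ∑ k ∈ range T, (Q (t₀ + k) - Q t₀) * x (t₀ + k)
      ≤ ∑ k ∈ range T, (k : ℝ) * c * c := by
        refine sum_le_sum fun k _ => ?_
        calc _ ≤ |(Q (t₀ + k) - Q t₀) * x (t₀ + k)| := le_abs_self _
          _ = |Q (t₀ + k) - Q t₀| * |x (t₀ + k)| := abs_mul _ _
          _ ≤ k * c * c := mul_le_mul (hdrift k) (hx _) (abs_nonneg _) (by positivity)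
    _ = T * (T - 1) / 2 * c ^ 2 := by rw [← sum_mul, ← sum_mul, sum_range_natCast]; ring

theorem freeze_queue_weight_general
    (c θ : ℝ) (t₀ T : ℕ)
    (Q x : ℕ → ℝ)
    (hQ : ∀ τ, |Q (τ + 1) - Q τ| ≤ c)
    (hx : ∀ τ, |x τ| ≤ c) :
    ∑ τ ∈ Finset.Ico t₀ (t₀ + T), (Q τ - θ) * x τ
      ≤ ((T : ℝ) * ((T : ℝ) - 1) / 2) * c ^ 2
        + (Q t₀ - θ) * ∑ τ ∈ Finset.Ico t₀ (t₀ + T), x τ := by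
  rw [sum_Ico_eq_sum_range, sum_Ico_eq_sum_range, add_tsub_cancel_left, ← sub_le_iff_le_add,
    mul_sum, ← sum_sub_distrib]
  convert sum_range_sub_mul_le hQ hx t₀ T using 2
  ring

/-- Sample-path rearrangement step in the T-slot drift lemma: the time-varying weight
`Q τ − θ` may be replaced by its value at the start of the frame at cost
`(T(T−1)/2)·c²`. -/
theorem freeze_queue_weight
    (c θ : ℝ) (hc : 0 ≤ c) (t₀ T : ℕ)
    (Q x : ℕ → ℝ)
    (hQ : ∀ τ, |Q (τ + 1) - Q τ| ≤ c)
    (hx : ∀ τ, |x τ| ≤ c) :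
    ∑ τ ∈ Finset.Ico t₀ (t₀ + T), (Q τ - θ) * x τ
      ≤ ((T : ℝ) * ((T : ℝ) - 1) / 2) * c ^ 2
        + (Q t₀ - θ) * ∑ τ ∈ Finset.Ico t₀ (t₀ + T), x τ :=
  freeze_queue_weight_general c θ t₀ T Q x hQ hx
end

section
/- Let S be a nonempty compact subset of ℝ × ℝ, and let x be a point in the topological frontier of the convex hull of S. Then there exist points p, q ∈ S and a real number t ∈ [0,1] such that x = t·p + (1−t)·q. -/
/-!
Since `S` is compact, so is `K = convexHull ℝ S` (by Carathéodory, `K` is a continuous image of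
`stdSimplex ℝ (Fin 3) × S³`), hence the boundary point `x` lies in `K`. If `K` has interior, a
supporting functional `f` at `x` cuts out the face `{y ∈ S | f y = f x}`, which lies on a line and
still carries `x` in its convex hull; otherwise `S` itself lies on a line. On a line, Carathéodory
needs at most two points.
-/

open Set Module

section LinearOrderedField

variable {𝕜 E : Type*} [Field 𝕜] [LinearOrder 𝕜] [IsStrictOrderedRing 𝕜]
  [AddCommGroup E] [Module 𝕜 E] {s : Set E} {x : E}

theorem mem_convexHull_iff_exists_fin_le_finrank_succ [FiniteDimensional 𝕜 E] :
    x ∈ convexHull 𝕜 s ↔ ∃ k ≤ finrank 𝕜 E + 1, ∃ w : Fin k → 𝕜, ∃ z : Fin k → E,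
      w ∈ stdSimplex 𝕜 (Fin k) ∧ (∀ i, z i ∈ s) ∧ ∑ i, w i • z i = x := by
  refine ⟨fun hx => ?_, ?_⟩
  · obtain ⟨ι, _, z, w, hzs, hind, hw₀, hw₁, hx⟩ := eq_pos_convex_span_of_mem_convexHull hx
    have hcard : Fintype.card ι ≤ finrank 𝕜 E + 1 :=
      hind.card_le_finrank_succ.trans (Nat.succ_le_succ (Submodule.finrank_le _))
    let e := Fintype.equivFin ι
    refine ⟨_, hcard, w ∘ e.symm, z ∘ e.symm,
      ⟨fun i => (hw₀ _).le, by simpa [e.symm.sum_comp] using hw₁⟩,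
      fun i => hzs (mem_range_self _), by simpa [e.symm.sum_comp (fun i => w i • z i)] using hx⟩
  · rintro ⟨k, -, w, z, hw, hz, rfl⟩
    exact mem_convexHull_of_exists_fintype w z hw.1 hw.2 hz rfl

theorem exists_mem_segment_of_finrank_vectorSpan_le_one [FiniteDimensional 𝕜 E]
    (hx : x ∈ convexHull 𝕜 s) (hs : finrank 𝕜 (vectorSpan 𝕜 s) ≤ 1) :
    ∃ p ∈ s, ∃ q ∈ s, x ∈ segment 𝕜 p q := by
  classical
  rw [convexHull_eq_union] at hx
  simp only [mem_iUnion] at hx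
  obtain ⟨t, hts, hind, hxt⟩ := hx
  have hcard : t.card ≤ 2 := by
    have h₁ := hind.card_le_finrank_succ
    have h₂ := Submodule.finrank_mono (vectorSpan_mono 𝕜 (Subtype.range_coe.trans_subset hts))
    rw [Fintype.card_coe] at h₁
    omega
  have hne : t.Nonempty := Finset.coe_nonempty.1 (convexHull_nonempty_iff.1 ⟨x, hxt⟩)
  interval_cases h : t.card
  · exact absurd h hne.card_pos.ne'
  · obtain ⟨p, rfl⟩ := Finset.card_eq_one.1 h
    refine ⟨p, hts (by simp), p, hts (by simp), ?_⟩
    simpa using hxt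
  · obtain ⟨p, q, -, rfl⟩ := Finset.card_eq_two.1 h
    refine ⟨p, hts (by simp), q, hts (by simp), ?_⟩
    simpa [convexHull_pair] using hxt

theorem mem_convexHull_setOf_eq_of_forall_le {f : E →ₗ[𝕜] 𝕜} {c : 𝕜}
    (hs : ∀ y ∈ s, f y ≤ c) (hx : x ∈ convexHull 𝕜 s) (hfx : f x = c) :
    x ∈ convexHull 𝕜 {y ∈ s | f y = c} := by
  obtain ⟨ι, _, w, z, hw₀, hw₁, hz, rfl⟩ := mem_convexHull_iff_exists_fintype.1 hx
  have hslack : ∑ i, w i * (c - f (z i)) = 0 := by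
    simp only [mul_sub, Finset.sum_sub_distrib, ← Finset.sum_mul, hw₁, one_mul, ← hfx, map_sum,
      map_smul, smul_eq_mul, sub_self]
  have hslack_eq : ∀ i, w i * (c - f (z i)) = 0 := fun i =>
    (Finset.sum_eq_zero_iff_of_nonneg fun j _ => mul_nonneg (hw₀ j) (sub_nonneg.2 (hs _ (hz j)))).1
      hslack i (Finset.mem_univ i)
  rw [← finsum_eq_sum_of_fintype]
  refine (convex_convexHull 𝕜 _).finsum_mem hw₀ (by rwa [finsum_eq_sum_of_fintype])
    fun i hi => subset_convexHull 𝕜 _ ⟨hz i, ?_⟩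
  linarith [sub_eq_zero.1 ((mul_eq_zero.1 (hslack_eq i)).resolve_left hi)]

end LinearOrderedField

theorem IsCompact.convexHull {E : Type*} [AddCommGroup E] [Module ℝ E] [TopologicalSpace E]
    [ContinuousAdd E] [ContinuousSMul ℝ E] [FiniteDimensional ℝ E] {s : Set E}
    (hs : IsCompact s) : IsCompact (convexHull ℝ s) := by
  have hunion : _root_.convexHull ℝ s = ⋃ k ∈ Iic (finrank ℝ E + 1),
      (fun p : (Fin k → ℝ) × (Fin k → E) => ∑ i, p.1 i • p.2 i) ''
        (stdSimplex ℝ (Fin k) ×ˢ univ.pi fun _ => s) := by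
    ext x
    simp [mem_convexHull_iff_exists_fin_le_finrank_succ, and_assoc]
  rw [hunion]
  exact (finite_Iic _).isCompact_biUnion fun k _ =>
    ((isCompact_stdSimplex _ _).prod (isCompact_univ_pi fun _ => hs)).image (by fun_prop)

theorem exists_subset_mem_convexHull_finrank_vectorSpan_lt {E : Type*} [NormedAddCommGroup E]
    [NormedSpace ℝ E] [FiniteDimensional ℝ E] {s : Set E} {x : E}
    (hx : x ∈ convexHull ℝ s) (hxi : x ∉ interior (convexHull ℝ s)) :
    ∃ t ⊆ s, x ∈ convexHull ℝ t ∧ finrank ℝ (vectorSpan ℝ t) < finrank ℝ E := by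
  by_cases hint : (interior (convexHull ℝ s)).Nonempty
  · obtain ⟨f, hf, hfx⟩ :=
      geometric_hahn_banach_of_nonempty_interior_point (convex_convexHull ℝ s) hxi hint
    refine ⟨{y ∈ s | f y = f x}, sep_subset _ _,
      mem_convexHull_setOf_eq_of_forall_le (f := (f : E →ₗ[ℝ] ℝ))
        (fun y hy => hfx y (subset_convexHull ℝ s hy)) hx rfl, ?_⟩
    have hker : vectorSpan ℝ {y ∈ s | f y = f x} ≤ LinearMap.ker (f : E →ₗ[ℝ] ℝ) := by
      rw [vectorSpan_def, Submodule.span_le]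
      rintro _ ⟨y, hy, z, hz, rfl⟩
      simp [hy.2, hz.2]
    refine (Submodule.finrank_mono hker).trans_lt (Submodule.finrank_lt ?_)
    simpa [LinearMap.ker_eq_top] using ContinuousLinearMap.coe_injective.ne hf
  · refine ⟨s, subset_rfl, hx, Submodule.finrank_lt ?_⟩
    have hne : s.Nonempty := convexHull_nonempty_iff.1 ⟨x, hx⟩
    rwa [interior_convexHull_nonempty_iff_affineSpan_eq_top,
      AffineSubspace.affineSpan_eq_top_iff_vectorSpan_eq_top_of_nonempty ℝ E E hne] at hint

theorem frontier_convexHull_two_points_general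
    (S : Set (ℝ × ℝ)) (hScomp : IsCompact S)
    (x : ℝ × ℝ) (hx : x ∈ frontier (convexHull ℝ S)) :
    ∃ p ∈ S, ∃ q ∈ S, ∃ t : ℝ, t ∈ Set.Icc (0 : ℝ) 1 ∧ x = t • p + (1 - t) • q := by
  have hxS : x ∈ convexHull ℝ S := hScomp.convexHull.isClosed.frontier_subset hx
  obtain ⟨T, hTS, hxT, hT⟩ := exists_subset_mem_convexHull_finrank_vectorSpan_lt hxS hx.2
  obtain ⟨p, hp, q, hq, hxqp⟩ := exists_mem_segment_of_finrank_vectorSpan_le_one hxT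
    (Nat.lt_succ_iff.1 (by simpa using hT))
  rw [segment_symm, segment_eq_image] at hxqp
  obtain ⟨t, ht, rfl⟩ := hxqp
  exact ⟨p, hTS hp, q, hTS hq, t, ht, add_comm _ _⟩

/-- For a nonempty compact set `S ⊆ ℝ²`, every point on the frontier of the convex hull
of `S` is a convex combination of at most two points of `S`. -/
theorem frontier_convexHull_two_points
    (S : Set (ℝ × ℝ)) (hSne : S.Nonempty) (hScomp : IsCompact S)
    (x : ℝ × ℝ) (hx : x ∈ frontier (convexHull ℝ S)) :
    ∃ p ∈ S, ∃ q ∈ S, ∃ t : ℝ, t ∈ Set.Icc (0 : ℝ) 1 ∧ x = t • p + (1 - t) • q :=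
  frontier_convexHull_two_points_general S hScomp x hx
end

section
/- Let S be a nonempty compact subset of ℝ × ℝ and let (r, d) be a point of the convex hull of S. Then there exist points p, q ∈ S and a real number t ∈ [0,1] such that t·p₂ + (1−t)·q₂ = d and t·p₁ + (1−t)·q₁ ≥ r, where p = (p₁, p₂) and q = (q₁, q₂). -/
/-!
Some finite `t ⊆ S` already has `(r, d)` in its convex hull. If no segment between two points
of `t` meets the ray `{(s, d) | r ≤ s}`, then any two points of `t` lie strictly to the left of
a common line through `(r, d)` that is not horizontal. Such lines are parametrised by a real
slope, and for each point the admissible slopes form an interval, so by Helly's theorem in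
dimension one a single line keeps all of `t`, hence also its convex hull, strictly to its left,
which contradicts `(r, d) ∈ convexHull t`.
-/

open Set Finset Filter Module

theorem Convex.helly_theorem_real {ι : Type*} {F : ι → Set ℝ} {s : Finset ι}
    (h_convex : ∀ i ∈ s, Convex ℝ (F i))
    (h_inter : ∀ i ∈ s, ∀ j ∈ s, (F i ∩ F j).Nonempty) :
    (⋂ i ∈ s, F i).Nonempty := by
  classical
  refine Convex.helly_theorem' h_convex fun I hIs hI ↦ ?_
  rw [finrank_self] at hI
  interval_cases h : #I
  · simp [Finset.card_eq_zero.1 h]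
  · obtain ⟨i, rfl⟩ := Finset.card_eq_one.1 h
    simpa using h_inter i (hIs (mem_singleton_self i)) i (hIs (mem_singleton_self i))
  · obtain ⟨i, j, -, rfl⟩ := Finset.card_eq_two.1 h
    simpa using h_inter i (hIs (by simp)) j (hIs (by simp))

theorem exists_lt_mul_and_lt_mul_of_mul_pos {g₁ g₂ : ℝ} (f₁ f₂ : ℝ) (hg : 0 < g₁ * g₂) :
    ∃ μ : ℝ, f₁ < μ * g₁ ∧ f₂ < μ * g₂ := by
  rcases pos_and_pos_or_neg_and_neg_of_mul_pos hg with ⟨hg₁, hg₂⟩ | ⟨hg₁, hg₂⟩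
  · exact ((tendsto_id.atTop_mul_const hg₁).eventually_gt_atTop f₁ |>.and
      ((tendsto_id.atTop_mul_const hg₂).eventually_gt_atTop f₂)).exists
  · exact ((tendsto_id.atBot_mul_const_of_neg hg₁).eventually_gt_atTop f₁ |>.and
      ((tendsto_id.atBot_mul_const_of_neg hg₂).eventually_gt_atTop f₂)).exists

/-- The segment from `(f₁, g₁)` to `(f₂, g₂)` meets the ray `[0, ∞) × {0}` unless some line
`f = μ g` has both points strictly on its left. -/
theorem exists_combination_eq_zero_nonneg_of_forall_mul_le {f₁ g₁ f₂ g₂ : ℝ}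
    (h : ∀ μ : ℝ, μ * g₁ ≤ f₁ ∨ μ * g₂ ≤ f₂) :
    ∃ s ∈ Icc (0 : ℝ) 1, s * g₁ + (1 - s) * g₂ = 0 ∧ 0 ≤ s * f₁ + (1 - s) * f₂ := by
  wlog h₂₁ : g₂ ≤ g₁ generalizing f₁ g₁ f₂ g₂
  · obtain ⟨s, ⟨hs₀, hs₁⟩, hg, hf⟩ := this (fun μ ↦ (h μ).symm) (le_of_not_ge h₂₁)
    exact ⟨1 - s, ⟨by linarith, by linarith⟩, by linarith, by linarith⟩
  have hg : g₁ * g₂ ≤ 0 := by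
    by_contra! hg
    obtain ⟨μ, hμ₁, hμ₂⟩ := exists_lt_mul_and_lt_mul_of_mul_pos f₁ f₂ hg
    exact (h μ).elim hμ₁.not_ge hμ₂.not_ge
  have hg₂ : g₂ ≤ 0 := by nlinarith
  have hg₁ : 0 ≤ g₁ := by nlinarith
  rcases h₂₁.eq_or_lt with heq | hlt
  · have hg₀ : g₁ = 0 := by linarith
    rcases h 0 with hf | hf
    · exact ⟨1, ⟨zero_le_one, le_rfl⟩, by simp [hg₀], by simpa using hf⟩
    · exact ⟨0, ⟨le_rfl, zero_le_one⟩, by simp [heq, hg₀], by simpa using hf⟩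
  · have hδ : 0 < g₁ - g₂ := sub_pos.2 hlt
    -- `μ` is the slope of the line through the two points
    have hcross : 0 ≤ g₁ * f₂ - g₂ * f₁ := by
      rcases h ((f₁ - f₂) / (g₁ - g₂)) with hf | hf <;>
      · rw [div_mul_eq_mul_div, div_le_iff₀ hδ] at hf
        nlinarith
    refine ⟨-g₂ / (g₁ - g₂), ⟨div_nonneg (by linarith) hδ.le, (div_le_one hδ).2 (by linarith)⟩,
      by field_simp; ring, ?_⟩
    have hvalue : -g₂ / (g₁ - g₂) * f₁ + (1 - -g₂ / (g₁ - g₂)) * f₂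
        = (g₁ * f₂ - g₂ * f₁) / (g₁ - g₂) := by
      field_simp
      ring
    rw [hvalue]
    exact div_nonneg hcross hδ.le

/-- The slopes `μ` for which `p` lies strictly to the left of the line through `x` with
direction `(μ, 1)`. -/
def separatingSlopes (x p : ℝ × ℝ) : Set ℝ := {μ | p.1 - x.1 < μ * (p.2 - x.2)}

theorem convex_separatingSlopes (x p : ℝ × ℝ) : Convex ℝ (separatingSlopes x p) :=
  convex_halfSpace_gt (LinearMap.mulRight ℝ (p.2 - x.2)).isLinear _

theorem exists_combination_of_separatingSlopes_inter_eq_empty {x p q : ℝ × ℝ}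
    (h : separatingSlopes x p ∩ separatingSlopes x q = ∅) :
    ∃ s ∈ Icc (0 : ℝ) 1, s * p.2 + (1 - s) * q.2 = x.2 ∧ x.1 ≤ s * p.1 + (1 - s) * q.1 := by
  have hslope (μ : ℝ) : μ * (p.2 - x.2) ≤ p.1 - x.1 ∨ μ * (q.2 - x.2) ≤ q.1 - x.1 := by
    by_contra! hμ
    exact (Set.eq_empty_iff_forall_notMem.1 h) μ hμ
  obtain ⟨s, hs, hg, hf⟩ := exists_combination_eq_zero_nonneg_of_forall_mul_le hslope
  exact ⟨s, hs, by linarith, by linarith⟩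

theorem notMem_convexHull_of_forall_mem_separatingSlopes {x : ℝ × ℝ} {t : Set (ℝ × ℝ)} {μ : ℝ}
    (h : ∀ p ∈ t, μ ∈ separatingSlopes x p) : x ∉ convexHull ℝ t := by
  have hconv : Convex ℝ {u : ℝ × ℝ | u.1 - μ * u.2 < x.1 - μ * x.2} :=
    convex_halfSpace_lt (LinearMap.fst ℝ ℝ ℝ - μ • LinearMap.snd ℝ ℝ ℝ).isLinear _
  have hsub : t ⊆ {u : ℝ × ℝ | u.1 - μ * u.2 < x.1 - μ * x.2} := fun p hp ↦ by
    have hp : p.1 - x.1 < μ * (p.2 - x.2) := h p hp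
    show p.1 - μ * p.2 < x.1 - μ * x.2
    linarith
  exact fun hx ↦ lt_irrefl (x.1 - μ * x.2) (convexHull_min hsub hconv hx)

theorem convexHull_two_point_improvement_general
    (S : Set (ℝ × ℝ))
    (r d : ℝ) (hrd : (r, d) ∈ convexHull ℝ S) :
    ∃ p ∈ S, ∃ q ∈ S, ∃ t : ℝ, t ∈ Set.Icc (0 : ℝ) 1 ∧
      t * p.2 + (1 - t) * q.2 = d ∧ t * p.1 + (1 - t) * q.1 ≥ r := by
  rw [convexHull_eq_union_convexHull_finite_subsets] at hrd
  obtain ⟨t, htS, hrdt⟩ := mem_iUnion₂.1 hrd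
  by_contra! hno
  have hpair : ∀ p ∈ t, ∀ q ∈ t,
      (separatingSlopes (r, d) p ∩ separatingSlopes (r, d) q).Nonempty := by
    intro p hp q hq
    rw [Set.nonempty_iff_ne_empty]
    intro hempty
    obtain ⟨s, hs, hd, hr⟩ := exists_combination_of_separatingSlopes_inter_eq_empty hempty
    exact (hno p (htS hp) q (htS hq) s hs hd).not_ge hr
  obtain ⟨μ, hμ⟩ :=
    Convex.helly_theorem_real (fun p _ ↦ convex_separatingSlopes (r, d) p) hpair
  exact notMem_convexHull_of_forall_mem_separatingSlopes (fun p hp ↦ mem_iInter₂.1 hμ p hp) hrdt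

/-- Geometric kernel of the two-price theorem: any point `(r, d)` of the convex hull of a
nonempty compact `S ⊆ ℝ²` can be matched in the second coordinate and weakly improved in
the first coordinate by a convex combination of at most two points of `S`. -/
theorem convexHull_two_point_improvement
    (S : Set (ℝ × ℝ)) (hSne : S.Nonempty) (hScomp : IsCompact S)
    (r d : ℝ) (hrd : (r, d) ∈ convexHull ℝ S) :
    ∃ p ∈ S, ∃ q ∈ S, ∃ t : ℝ, t ∈ Set.Icc (0 : ℝ) 1 ∧
      t * p.2 + (1 - t) * q.2 = d ∧ t * p.1 + (1 - t) * q.1 ≥ r :=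
  convexHull_two_point_improvement_general S r d hrd
end

section
/- Let K (products), 𝒴 (demand states), and M (raw materials) be finite nonempty sets. Let π : 𝒴 → ℝ satisfy π(y) ≥ 0 for all y, let β : M → K → ℝ satisfy β(m)(k) ≥ 0, and for each k ∈ K let α_k ∈ ℝ, let 𝒫_k ⊆ ℝ be a nonempty compact set, and let F_k : ℝ → 𝒴 → ℝ be continuous in its first argument with F_k(p, y) ≥ 0 for p ∈ 𝒫_k. For (k, y) ∈ K × 𝒴 define Ω_k(y) = {(z·(p − α_k)·F_k(p, y), z·F_k(p, y)) : p ∈ 𝒫_k, z ∈ {0,1}} ⊆ ℝ². Suppose given reals r̂_k(y), d̂_k(y) with (r̂_k(y), d̂_k(y)) ∈ convexHull(Ω_k(y)) for all (k, y), and reals r̂ and μ̂_m (m ∈ M) with Σ_{k ∈ K} Σ_{y ∈ 𝒴} π(y)·r̂_k(y) ≥ r̂ and Σ_{k ∈ K} β(m)(k)·Σ_{y ∈ 𝒴} π(y)·d̂_k(y) ≤ μ̂_m for all m ∈ M. Then there exist functions η : K × 𝒴 → [0,1], z¹, z² : K × 𝒴 → {0,1}, and p¹, p² : K × 𝒴 →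 ℝ with p¹(k,y), p²(k,y) ∈ 𝒫_k, such that setting r*_k(y) = η(k,y)·z¹(k,y)·(p¹(k,y) − α_k)·F_k(p¹(k,y), y) + (1 − η(k,y))·z²(k,y)·(p²(k,y) − α_k)·F_k(p²(k,y), y) and d*_k(y) = η(k,y)·z¹(k,y)·F_k(p¹(k,y), y) + (1 − η(k,y))·z²(k,y)·F_k(p²(k,y), y), one has d*_k(y) = d̂_k(y) for all (k, y), Σ_{k} Σ_{y} π(y)·r*_k(y) ≥ r̂, and Σ_{k} β(m)(k)·Σ_{y} π(y)·d*_k(y) ≤ μ̂_m for all m ∈ M. -/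
/-!
Only the demand coordinate of a pair `(r̂, d̂)` in the convex hull of `Ω_k(y)` has to be matched
exactly; the revenue may grow. So it suffices to show: if `x ∈ convexHull ℝ S` for `S ⊆ ℝ²`, some
chord of `S` passes through the horizontal line `{v | v.2 = x.2}` at a point whose first coordinate
is at least `x.1`. If every such chord crossed strictly to the left of `x`, then for a finite `S`
the slopes from `x` to the points of `S` above the line would all be smaller than those to the
points below it, and a line through `x` of intermediate slope would leave all of `S` strictly on
one side, which `x ∈ convexHull ℝ S` forbids.
-/

section

open Set

theorem exists_chord_dominating_of_mem_convexHull_finset {t : Finset (ℝ × ℝ)} {x : ℝ × ℝ}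
    (hx : x ∈ convexHull ℝ (t : Set (ℝ × ℝ))) :
    ∃ a ∈ t, ∃ b ∈ t, ∃ η ∈ Icc (0 : ℝ) 1,
      η * a.2 + (1 - η) * b.2 = x.2 ∧ x.1 ≤ η * a.1 + (1 - η) * b.1 := by
  classical
  by_contra! h
  obtain ⟨c, hc_high, hc_low⟩ := Finset.exists_between'
    ((t.filter (x.2 < ·.2)).image fun w => (w.1 - x.1) / (w.2 - x.2))
    ((t.filter (·.2 < x.2)).image fun v => (x.1 - v.1) / (x.2 - v.2)) <| by
      simp only [Finset.mem_image, Finset.mem_filter]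
      rintro _ ⟨w, ⟨hw, hwx⟩, rfl⟩ _ ⟨v, ⟨hv, hvx⟩, rfl⟩
      have hvw : 0 < w.2 - v.2 := by linarith
      have hchord := h v hv w hw ((w.2 - x.2) / (w.2 - v.2))
        ⟨by positivity, (div_le_one hvw).2 (by linarith)⟩ (by field_simp; ring)
      rw [div_lt_div_iff₀ (by linarith) (by linarith)]
      rw [← sub_pos] at hchord ⊢
      field_simp at hchord
      linarith
  have hsep : ∀ v ∈ t, v.1 - c * v.2 < x.1 - c * x.2 := by
    intro v hv
    rcases lt_trichotomy v.2 x.2 with hvx | hvx | hvx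
    · have := hc_low _ (Finset.mem_image_of_mem _ (Finset.mem_filter.2 ⟨hv, hvx⟩))
      rw [lt_div_iff₀ (by linarith)] at this
      linarith
    · have := h v hv v hv 1 ⟨zero_le_one, le_rfl⟩ (by simp [hvx])
      rw [hvx]
      linarith
    · have := hc_high _ (Finset.mem_image_of_mem _ (Finset.mem_filter.2 ⟨hv, hvx⟩))
      rw [div_lt_iff₀ (by linarith)] at this
      linarith
  have hlin : IsLinearMap ℝ fun z : ℝ × ℝ => z.1 - c * z.2 :=
    ⟨fun _ _ => by simp only [Prod.fst_add, Prod.snd_add]; ring,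
     fun _ _ => by simp only [Prod.smul_fst, Prod.smul_snd, smul_eq_mul]; ring⟩
  exact lt_irrefl (x.1 - c * x.2) (convexHull_min hsep (convex_halfSpace_lt hlin _) hx)

theorem exists_chord_dominating_of_mem_convexHull {S : Set (ℝ × ℝ)} {x : ℝ × ℝ}
    (hx : x ∈ convexHull ℝ S) :
    ∃ a ∈ S, ∃ b ∈ S, ∃ η ∈ Icc (0 : ℝ) 1,
      η * a.2 + (1 - η) * b.2 = x.2 ∧ x.1 ≤ η * a.1 + (1 - η) * b.1 := by
  rw [convexHull_eq_union_convexHull_finite_subsets, mem_iUnion₂] at hx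
  obtain ⟨t, htS, hxt⟩ := hx
  obtain ⟨a, ha, b, hb, hab⟩ := exists_chord_dominating_of_mem_convexHull_finset hxt
  exact ⟨a, htS ha, b, htS hb, hab⟩

end

theorem two_prices_sufficient_general
    {K Y M : Type*} [Fintype K] [Fintype Y]
    (π : Y → ℝ) (hπ : ∀ y, 0 ≤ π y)
    (β : M → K → ℝ)
    (α : K → ℝ)
    (P : K → Set ℝ)
    (F : K → ℝ → Y → ℝ)
    (rhat dhat : K → Y → ℝ)
    (hconv : ∀ k y, (rhat k y, dhat k y) ∈ convexHull ℝ
      {v : ℝ × ℝ | ∃ p ∈ P k, ∃ z ∈ ({0, 1} : Set ℝ),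
        v = (z * (p - α k) * F k p y, z * F k p y)})
    (rtot : ℝ) (muhat : M → ℝ)
    (hr : ∑ k, ∑ y, π y * rhat k y ≥ rtot)
    (hμ : ∀ m, ∑ k, β m k * ∑ y, π y * dhat k y ≤ muhat m) :
    ∃ (η z₁ z₂ p₁ p₂ : K → Y → ℝ),
      (∀ k y, η k y ∈ Set.Icc (0 : ℝ) 1) ∧
      (∀ k y, z₁ k y ∈ ({0, 1} : Set ℝ)) ∧
      (∀ k y, z₂ k y ∈ ({0, 1} : Set ℝ)) ∧
      (∀ k y, p₁ k y ∈ P k) ∧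
      (∀ k y, p₂ k y ∈ P k) ∧
      (∀ k y,
        η k y * (z₁ k y * F k (p₁ k y) y)
          + (1 - η k y) * (z₂ k y * F k (p₂ k y) y) = dhat k y) ∧
      (∑ k, ∑ y, π y *
          (η k y * (z₁ k y * (p₁ k y - α k) * F k (p₁ k y) y)
            + (1 - η k y) * (z₂ k y * (p₂ k y - α k) * F k (p₂ k y) y)) ≥ rtot) ∧
      (∀ m, ∑ k, β m k * ∑ y, π y *
          (η k y * (z₁ k y * F k (p₁ k y) y)
            + (1 - η k y) * (z₂ k y * F k (p₂ k y) y)) ≤ muhat m) := by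
  have two_options : ∀ k y, ∃ η z₁ z₂ p₁ p₂ : ℝ,
      η ∈ Set.Icc (0 : ℝ) 1 ∧ z₁ ∈ ({0, 1} : Set ℝ) ∧ z₂ ∈ ({0, 1} : Set ℝ) ∧
      p₁ ∈ P k ∧ p₂ ∈ P k ∧
      η * (z₁ * F k p₁ y) + (1 - η) * (z₂ * F k p₂ y) = dhat k y ∧
      rhat k y ≤ η * (z₁ * (p₁ - α k) * F k p₁ y) + (1 - η) * (z₂ * (p₂ - α k) * F k p₂ y) := by
    intro k y
    obtain ⟨_, ⟨p₁, hp₁, z₁, hz₁, rfl⟩, _, ⟨p₂, hp₂, z₂, hz₂, rfl⟩, η, hη, hd, hrev⟩ :=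
      exists_chord_dominating_of_mem_convexHull (hconv k y)
    exact ⟨η, z₁, z₂, p₁, p₂, hη, hz₁, hz₂, hp₁, hp₂, hd, hrev⟩
  choose η z₁ z₂ p₁ p₂ hη hz₁ hz₂ hp₁ hp₂ hd hrev using two_options
  refine ⟨η, z₁, z₂, p₁, p₂, hη, hz₁, hz₂, hp₁, hp₂, hd, ?_, fun m => ?_⟩
  · refine hr.trans (Finset.sum_le_sum fun k _ => Finset.sum_le_sum fun y _ => ?_)
    exact mul_le_mul_of_nonneg_left (hrev k y) (hπ y)
  · simpa only [hd] using hμ m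

/-- The Two Prices Are Sufficient Theorem: any revenue target `rhat` and
material-consumption targets `muhat m` met by a stationary randomized pricing policy
(whose per-(product, demand-state) revenue/demand pairs lie in the convex hull of
the achievable sets `Ω_k(y)`) can be met by a policy that randomizes between at most
two price/sale options for each product and each demand state. -/
theorem two_prices_sufficient
    {K Y M : Type*} [Fintype K] [Fintype Y] [Fintype M]
    [Nonempty K] [Nonempty Y] [Nonempty M]
    (π : Y → ℝ) (hπ : ∀ y, 0 ≤ π y)
    (β : M → K → ℝ) (hβ : ∀ m k, 0 ≤ β m k)
    (α : K → ℝ)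
    (P : K → Set ℝ) (hPne : ∀ k, (P k).Nonempty) (hPcomp : ∀ k, IsCompact (P k))
    (F : K → ℝ → Y → ℝ)
    (hFcont : ∀ k y, Continuous (fun p => F k p y))
    (hFnn : ∀ k y, ∀ p ∈ P k, 0 ≤ F k p y)
    (rhat dhat : K → Y → ℝ)
    (hconv : ∀ k y, (rhat k y, dhat k y) ∈ convexHull ℝ
      {v : ℝ × ℝ | ∃ p ∈ P k, ∃ z ∈ ({0, 1} : Set ℝ),
        v = (z * (p - α k) * F k p y, z * F k p y)})
    (rtot : ℝ) (muhat : M → ℝ)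
    (hr : ∑ k, ∑ y, π y * rhat k y ≥ rtot)
    (hμ : ∀ m, ∑ k, β m k * ∑ y, π y * dhat k y ≤ muhat m) :
    ∃ (η z₁ z₂ p₁ p₂ : K → Y → ℝ),
      (∀ k y, η k y ∈ Set.Icc (0 : ℝ) 1) ∧
      (∀ k y, z₁ k y ∈ ({0, 1} : Set ℝ)) ∧
      (∀ k y, z₂ k y ∈ ({0, 1} : Set ℝ)) ∧
      (∀ k y, p₁ k y ∈ P k) ∧
      (∀ k y, p₂ k y ∈ P k) ∧
      (∀ k y,
        η k y * (z₁ k y * F k (p₁ k y) y)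
          + (1 - η k y) * (z₂ k y * F k (p₂ k y) y) = dhat k y) ∧
      (∑ k, ∑ y, π y *
          (η k y * (z₁ k y * (p₁ k y - α k) * F k (p₁ k y) y)
            + (1 - η k y) * (z₂ k y * (p₂ k y - α k) * F k (p₂ k y) y)) ≥ rtot) ∧
      (∀ m, ∑ k, β m k * ∑ y, π y *
          (η k y * (z₁ k y * F k (p₁ k y) y)
            + (1 - η k y) * (z₂ k y * F k (p₂ k y) y)) ≤ muhat m) :=
  two_prices_sufficient_general π hπ β α P F rhat dhat hconv rtot muhat hr hμ
end

section
/- Let θ, A_max, μ_max be nonnegative real numbers and let Q, A, μ : ℕ → ℝ be sequences satisfying, for every t ∈ ℕ: Q(t+1) = Q(t) − μ(t) + A(t), 0 ≤ A(t) ≤ A_max, 0 ≤ μ(t) ≤ μ_max, A(t) = 0 whenever Q(t) > θ, and μ(t) = 0 whenever Q(t) < 2·μ_max. If μ_max ≤ Q(0) ≤ θ + A_max, then μ_max ≤ Q(t) ≤ θ + A_max for all t ∈ ℕ. -/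
/-! Each bound is an invariant of one step `q ↦ q - m + a`. Consumption `m ≤ μmax` can only
happen from `q ≥ 2 μmax`, so it never takes the level below `μmax`; a purchase `a ≤ Amax` can
only happen from `q ≤ θ`, so it never takes the level above `θ + Amax`. -/

namespace JPP

theorem le_step_of_consumption_stop {q m a μmax : ℝ} (hq : μmax ≤ q) (ha : 0 ≤ a)
    (hm : m ≤ μmax) (hstop : q < 2 * μmax → m = 0) : μmax ≤ q - m + a := by
  rcases lt_or_ge q (2 * μmax) with hlow | hhigh
  · rw [hstop hlow]
    linarith
  · linarith

theorem step_le_of_purchase_stop {q m a θ Amax : ℝ} (hq : q ≤ θ + Amax) (hm : 0 ≤ m)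
    (ha : a ≤ Amax) (hstop : θ < q → a = 0) : q - m + a ≤ θ + Amax := by
  rcases le_or_gt q θ with hlow | hhigh
  · linarith
  · rw [hstop hhigh]
    linarith

end JPP

theorem jpp_queue_bounds_general
    (θ Amax μmax : ℝ)
    (Q A μ : ℕ → ℝ)
    (hdyn : ∀ t, Q (t + 1) = Q t - μ t + A t)
    (hA : ∀ t, 0 ≤ A t ∧ A t ≤ Amax)
    (hμ : ∀ t, 0 ≤ μ t ∧ μ t ≤ μmax)
    (hAstop : ∀ t, Q t > θ → A t = 0)
    (hμstop : ∀ t, Q t < 2 * μmax → μ t = 0)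
    (h0 : μmax ≤ Q 0 ∧ Q 0 ≤ θ + Amax) :
    ∀ t, μmax ≤ Q t ∧ Q t ≤ θ + Amax := by
  intro t
  induction t with
  | zero => exact h0
  | succ t ih =>
    rw [hdyn t]
    exact ⟨JPP.le_step_of_consumption_stop ih.1 (hA t).1 (hμ t).2 (hμstop t),
      JPP.step_le_of_purchase_stop ih.2 (hμ t).1 (hA t).2 (hAstop t)⟩

/-- Part (a) of the JPP performance theorem (sample-path, single queue): the inventory
always stays between `μmax` and `θ + Amax`. -/
theorem jpp_queue_bounds
    (θ Amax μmax : ℝ) (hθ : 0 ≤ θ) (hAmax : 0 ≤ Amax) (hμmax : 0 ≤ μmax)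
    (Q A μ : ℕ → ℝ)
    (hdyn : ∀ t, Q (t + 1) = Q t - μ t + A t)
    (hA : ∀ t, 0 ≤ A t ∧ A t ≤ Amax)
    (hμ : ∀ t, 0 ≤ μ t ∧ μ t ≤ μmax)
    (hAstop : ∀ t, Q t > θ → A t = 0)
    (hμstop : ∀ t, Q t < 2 * μmax → μ t = 0)
    (h0 : μmax ≤ Q 0 ∧ Q 0 ≤ θ + Amax) :
    ∀ t, μmax ≤ Q t ∧ Q t ≤ θ + Amax :=
  jpp_queue_bounds_general θ Amax μmax Q A μ hdyn hA hμ hAstop hμstop h0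
end

section
/- Let M be a finite index set, V > 0 a real number, T ≥ 1 an integer, and t₀ ∈ ℕ. For each m ∈ M let θ(m) ∈ ℝ and A_max(m), μ_max(m) ≥ 0, and let Q_m, A_m, μ_m : ℕ → ℝ satisfy Q_m(τ+1) = Q_m(τ) − μ_m(τ) + A_m(τ), 0 ≤ A_m(τ) ≤ A_max(m), and 0 ≤ μ_m(τ) ≤ μ_max(m) for all τ. Let φ, φ* : ℕ → ℝ and, for each m ∈ M, let A*_m, x*_m : ℕ → ℝ satisfy |A*_m(τ) − x*_m(τ)| ≤ max(A_max(m), μ_max(m)) for all τ. Suppose the per-slot minimization property holds: for every τ, −V·φ(τ) + Σ_{m} (Q_m(τ) − θ(m))·(A_m(τ) − μ_m(τ)) ≤ −V·φ*(τ) + Σ_{m} (Q_m(τ) − θ(m))·(A*_m(τ) − x*_m(τ)). Then, defining L(τ) = (1/2)·Σ_{m} (Q_m(τ) − θ(m))² and B = (1/2)·Σ_{m} max(A_max(m)², μ_max(m)²), one has: L(t₀+T) − L(t₀) − V·Σ_{τ=t₀}^{t₀+T−1} φ(τ) ≤ T²·B − V·Σ_{τ=t₀}^{t₀+T−1} φ*(τ)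 + Σ_{m} (Q_m(t₀) − θ(m))·Σ_{τ=t₀}^{t₀+T−1} (A*_m(τ) − x*_m(τ)). -/
/-!
Write `w = Q - θ` for the queue deviations and `d = A - μ` for the net arrivals, so that
`w (τ + 1) = w τ + d τ` and `L (τ + 1) - L τ = Σₘ w d + ½ Σₘ d²`. In each slot the minimization
property replaces `Σₘ w d` by the comparison policy's `Σₘ w (A* - x*)`. Both `d` and `A* - x*` are
bounded coordinatewise by `c = max A_max μ_max`, so in slot `t₀ + k` every coordinate of `w` is within
`k c` of its value at `t₀`, and freezing the weights at `w t₀` costs at most `k Σₘ c²`. Summing the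
slot bounds `(k + ½) Σₘ c²` over `k < T` gives `T² B`.
-/

open Finset

section

variable {M : Type*} [Fintype M]

theorem half_sum_sq_add_sub_half_sum_sq (w d : M → ℝ) :
    1 / 2 * ∑ m, (w m + d m) ^ 2 - 1 / 2 * ∑ m, w m ^ 2
      = ∑ m, w m * d m + 1 / 2 * ∑ m, d m ^ 2 := by
  rw [mul_sum, mul_sum, mul_sum, ← sum_sub_distrib, ← sum_add_distrib]
  exact sum_congr rfl fun m _ => by ring

theorem sum_mul_le_sum_mul_add_sum_mul {w w₀ y a b : M → ℝ}
    (hw : ∀ m, |w m - w₀ m| ≤ a m) (hy : ∀ m, |y m| ≤ b m) :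
    ∑ m, w m * y m ≤ ∑ m, w₀ m * y m + ∑ m, a m * b m := by
  rw [← sum_add_distrib]
  refine sum_le_sum fun m _ => ?_
  calc w m * y m = w₀ m * y m + (w m - w₀ m) * y m := by ring
    _ ≤ w₀ m * y m + |w m - w₀ m| * |y m| := by rw [← abs_mul]; gcongr; exact le_abs_self _
    _ ≤ w₀ m * y m + a m * b m := by
      gcongr
      exacts [(abs_nonneg _).trans (hw m), hw m, hy m]

theorem slot_drift_le {w w₀ d y c : M → ℝ} {V φ φs k : ℝ}
    (hmin : -V * φ + ∑ m, w m * d m ≤ -V * φs + ∑ m, w m * y m)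
    (hd : ∀ m, |d m| ≤ c m) (hy : ∀ m, |y m| ≤ c m) (hw : ∀ m, |w m - w₀ m| ≤ k * c m) :
    1 / 2 * ∑ m, (w m + d m) ^ 2 - 1 / 2 * ∑ m, w m ^ 2 - V * φ
      ≤ (k + 1 / 2) * ∑ m, c m ^ 2 + (-V * φs + ∑ m, w₀ m * y m) := by
  have hfreeze : ∑ m, w m * y m ≤ ∑ m, w₀ m * y m + k * ∑ m, c m ^ 2 := by
    convert sum_mul_le_sum_mul_add_sum_mul hw hy using 2
    rw [mul_sum]
    exact sum_congr rfl fun m _ => by ring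
  have hsq : ∑ m, d m ^ 2 ≤ ∑ m, c m ^ 2 :=
    sum_le_sum fun m _ => sq_le_sq.2 ((hd m).trans (le_abs_self _))
  linarith [half_sum_sq_add_sub_half_sum_sq w d]

end

theorem sub_sub_sum_Ico_le_of_succ_sub_le {L a b : ℕ → ℝ} {S : ℝ} {t₀ T : ℕ}
    (h : ∀ k < T, L (t₀ + k + 1) - L (t₀ + k) - a (t₀ + k) ≤ (k + 1 / 2) * S + b (t₀ + k)) :
    L (t₀ + T) - L t₀ - ∑ τ ∈ Ico t₀ (t₀ + T), a τ
      ≤ T ^ 2 / 2 * S + ∑ τ ∈ Ico t₀ (t₀ + T), b τ := by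
  induction T with
  | zero => simp
  | succ T ih =>
    rw [← add_assoc, sum_Ico_succ_top (by omega), sum_Ico_succ_top (by omega)]
    have hlast := h T (by omega)
    have hprev := ih fun k hk => h k (by omega)
    push_cast
    linarith [show ((T : ℝ) + 1) ^ 2 / 2 * S = T ^ 2 / 2 * S + (T + 1 / 2) * S by ring]

theorem tslot_drift_lemma_general
    {M : Type*} [Fintype M]
    (V : ℝ) (T : ℕ) (t₀ : ℕ)
    (θ Amax μmax : M → ℝ)
    (Q A μ : M → ℕ → ℝ)
    (hdyn : ∀ m τ, Q m (τ + 1) = Q m τ - μ m τ + A m τ)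
    (hA : ∀ m τ, 0 ≤ A m τ ∧ A m τ ≤ Amax m)
    (hμ : ∀ m τ, 0 ≤ μ m τ ∧ μ m τ ≤ μmax m)
    (φ φs : ℕ → ℝ) (As xs : M → ℕ → ℝ)
    (hcomp : ∀ m τ, |As m τ - xs m τ| ≤ max (Amax m) (μmax m))
    (hmin : ∀ τ,
      -V * φ τ + ∑ m, (Q m τ - θ m) * (A m τ - μ m τ)
        ≤ -V * φs τ + ∑ m, (Q m τ - θ m) * (As m τ - xs m τ)) :
    ((1 : ℝ) / 2) * ∑ m, (Q m (t₀ + T) - θ m) ^ 2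
        - (1 / 2) * ∑ m, (Q m t₀ - θ m) ^ 2
        - V * ∑ τ ∈ Finset.Ico t₀ (t₀ + T), φ τ
      ≤ (T : ℝ) ^ 2 * ((1 / 2) * ∑ m, max ((Amax m) ^ 2) ((μmax m) ^ 2))
        - V * ∑ τ ∈ Finset.Ico t₀ (t₀ + T), φs τ
        + ∑ m, (Q m t₀ - θ m) * ∑ τ ∈ Finset.Ico t₀ (t₀ + T), (As m τ - xs m τ) := by
  set c : M → ℝ := fun m => max (Amax m) (μmax m)
  have hstep : ∀ m τ, Q m (τ + 1) - θ m = (Q m τ - θ m) + (A m τ - μ m τ) := fun m τ => by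
    rw [hdyn]; ring
  have hd : ∀ m τ, |A m τ - μ m τ| ≤ c m := fun m τ =>
    abs_sub_le_of_nonneg_of_le (hA m τ).1 ((hA m τ).2.trans (le_max_left _ _))
      (hμ m τ).1 ((hμ m τ).2.trans (le_max_right _ _))
  have hdrift : ∀ m k, |(Q m (t₀ + k) - θ m) - (Q m t₀ - θ m)| ≤ k * c m := fun m k => by
    have := dist_le_Ico_sum_of_dist_le (f := Q m) (d := fun _ => c m) (Nat.le_add_right t₀ k)
      fun {j} _ _ => by rw [dist_comm, Real.dist_eq, hdyn]; convert hd m j using 2; ring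
    simpa [Real.dist_eq, abs_sub_comm] using this
  have hB : ∑ m, c m ^ 2 ≤ ∑ m, max (Amax m ^ 2) (μmax m ^ 2) := sum_le_sum fun m _ => by
    rcases max_choice (Amax m) (μmax m) with h | h <;> simp only [c, h]
    exacts [le_max_left _ _, le_max_right _ _]
  have hframe := sub_sub_sum_Ico_le_of_succ_sub_le (S := ∑ m, c m ^ 2) (t₀ := t₀) (T := T)
    (L := fun τ => 1 / 2 * ∑ m, (Q m τ - θ m) ^ 2) (a := fun τ => V * φ τ)
    (b := fun τ => -V * φs τ + ∑ m, (Q m t₀ - θ m) * (As m τ - xs m τ)) fun k _ => by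
      simp only [hstep]
      exact slot_drift_le (hmin (t₀ + k)) (fun m => hd m _) (fun m => hcomp m _) (hdrift · k)
  have hsum : ∑ τ ∈ Ico t₀ (t₀ + T), (-V * φs τ + ∑ m, (Q m t₀ - θ m) * (As m τ - xs m τ))
      = -V * ∑ τ ∈ Ico t₀ (t₀ + T), φs τ
        + ∑ m, (Q m t₀ - θ m) * ∑ τ ∈ Ico t₀ (t₀ + T), (As m τ - xs m τ) := by
    rw [sum_add_distrib, ← mul_sum, sum_comm]
    simp only [mul_sum]
  beta_reduce at hframe
  rw [← mul_sum, hsum] at hframe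
  have hscale := mul_le_mul_of_nonneg_left hB (by positivity : (0 : ℝ) ≤ T ^ 2 / 2)
  linarith

/-- Deterministic core of the T-slot sample-path drift lemma for JPP: if the implemented
policy minimizes the per-slot drift-plus-penalty expression, then the T-slot Lyapunov
drift minus `V` times the implemented profit is bounded by the comparison policy's
quantities, with the queue weights frozen at the start of the frame. -/
theorem tslot_drift_lemma
    {M : Type*} [Fintype M]
    (V : ℝ) (hV : 0 < V) (T : ℕ) (hT : 1 ≤ T) (t₀ : ℕ)
    (θ Amax μmax : M → ℝ) (hAmax : ∀ m, 0 ≤ Amax m) (hμmax : ∀ m, 0 ≤ μmax m)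
    (Q A μ : M → ℕ → ℝ)
    (hdyn : ∀ m τ, Q m (τ + 1) = Q m τ - μ m τ + A m τ)
    (hA : ∀ m τ, 0 ≤ A m τ ∧ A m τ ≤ Amax m)
    (hμ : ∀ m τ, 0 ≤ μ m τ ∧ μ m τ ≤ μmax m)
    (φ φs : ℕ → ℝ) (As xs : M → ℕ → ℝ)
    (hcomp : ∀ m τ, |As m τ - xs m τ| ≤ max (Amax m) (μmax m))
    (hmin : ∀ τ,
      -V * φ τ + ∑ m, (Q m τ - θ m) * (A m τ - μ m τ)
        ≤ -V * φs τ + ∑ m, (Q m τ - θ m) * (As m τ - xs m τ)) :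
    ((1 : ℝ) / 2) * ∑ m, (Q m (t₀ + T) - θ m) ^ 2
        - (1 / 2) * ∑ m, (Q m t₀ - θ m) ^ 2
        - V * ∑ τ ∈ Finset.Ico t₀ (t₀ + T), φ τ
      ≤ (T : ℝ) ^ 2 * ((1 / 2) * ∑ m, max ((Amax m) ^ 2) ((μmax m) ^ 2))
        - V * ∑ τ ∈ Finset.Ico t₀ (t₀ + T), φs τ
        + ∑ m, (Q m t₀ - θ m) * ∑ τ ∈ Finset.Ico t₀ (t₀ + T), (As m τ - xs m τ) :=
  tslot_drift_lemma_general V T t₀ θ Amax μmax Q A μ hdyn hA hμ φ φs As xs hcomp hmin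
end
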